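/- Let MΣ = (P, Σ, V, MV) be a CQ weakly acyclic materialized-view setting, Q a CQ query, and (Q)^{MΣ} a chase result of the MΣ-expansion Q' of Q with Υ_{MΣ}. Then (1) (Q)^{MΣ} is unconditionally contained in Q, i.e., (Q)^{MΣ}(I) ⊆ Q(I) for every instance I; and (2) Q is MΣ-conditionally contained in (Q)^{MΣ}, i.e., Q(I) ⊆ (Q)^{MΣ}(I) for every instance I with V ⇒_{I,Σ} MV. -/

import Mathlib

namespace CertainViews

/-! ### Values, terms, schemas, instances -/

/-- Values: constants and labeled nulls. -/
inductive Val : Type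
  | const : ℕ → Val
  | null : ℕ → Val
deriving DecidableEq

/-- A value is a constant. -/
def Val.IsConst (a : Val) : Prop := ∃ c, a = Val.const c

/-- Terms of queries and dependencies: query variables and constants. -/
inductive Term : Type
  | var : ℕ → Term
  | const : ℕ → Term
deriving DecidableEq

/-- Evaluation of a term under an assignment of values to variables
(constants are fixed, as in homomorphisms/valuations). -/
def Term.eval (ν : ℕ → Val) : Term → Val
  | .var x => ν x
  | .const c => .const c

/-- A relational schema: a collection of relation symbols, each with a fixed arity. -/
structure Schema : Type 1 where
  rel : Type
  arity : rel → ℕ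

variable {S : Schema}

/-- An instance of a schema assigns a relation (a set of tuples of values)
to each relation symbol. -/
structure Inst (S : Schema) : Type where
  rels : ∀ r : S.rel, Set (Fin (S.arity r) → Val)

/-- The facts of an instance, as a set of (relation symbol, tuple) pairs. -/
def Inst.facts (I : Inst S) : Set ((r : S.rel) × (Fin (S.arity r) → Val)) :=
  { p | p.2 ∈ I.rels p.1 }

/-- The instance determined by a set of facts. -/
def Inst.ofFacts (F : Set ((r : S.rel) × (Fin (S.arity r) → Val))) : Inst S :=
  ⟨fun r => { t | (⟨r, t⟩ : (r : S.rel) × (Fin (S.arity r) → Val)) ∈ F }⟩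

/-- A ground instance contains only constants. -/
def Inst.Ground (I : Inst S) : Prop :=
  ∀ r, ∀ t ∈ I.rels r, ∀ i, (t i).IsConst

/-- The active domain of an instance. -/
def Inst.adom (I : Inst S) : Set Val :=
  { a | ∃ p ∈ I.facts, ∃ i, p.2 i = a }

/-- Applying a mapping on values to all facts of an instance. -/
def Inst.map (ρ : Val → Val) (I : Inst S) : Inst S :=
  Inst.ofFacts ((fun p : (r : S.rel) × (Fin (S.arity r) → Val) =>
    (⟨p.1, fun i => ρ (p.2 i)⟩ : (r : S.rel) × (Fin (S.arity r) → Val))) '' I.facts)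

/-- A homomorphism between instances: a mapping of values fixing constants
that sends facts to facts. -/
def InstHom (J I : Inst S) : Prop :=
  ∃ ρ : Val → Val, (∀ c, ρ (Val.const c) = Val.const c) ∧
    ∀ p ∈ J.facts, (⟨p.1, fun i => ρ (p.2 i)⟩ : (r : S.rel) × (Fin (S.arity r) → Val)) ∈ I.facts

/-! ### Atoms, conjunctive queries -/

/-- A relational atom over a schema. -/
structure Atom (S : Schema) : Type where
  rel : S.rel
  args : Fin (S.arity rel) → Term

/-- Applying a term mapping to an atom. -/
def Atom.mapTerms (f : Term → Term) (A : Atom S) : Atom S :=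
  ⟨A.rel, fun i => f (A.args i)⟩

/-- The variables occurring in a list of atoms. -/
def BodyVars (B : List (Atom S)) : Set ℕ :=
  { x | ∃ A ∈ B, ∃ j, A.args j = Term.var x }

/-- A conjunction of atoms holds in an instance under a valuation. -/
def BodyHolds (ν : ℕ → Val) (B : List (Atom S)) (I : Inst S) : Prop :=
  ∀ A ∈ B, (fun i => (A.args i).eval ν) ∈ I.rels A.rel

/-- The set of facts obtained by applying a valuation to a list of atoms. -/
def factSet (B : List (Atom S)) (ν : ℕ → Val) : Set ((r : S.rel) × (Fin (S.arity r) → Val)) :=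
  { p | ∃ A ∈ B, p = ⟨A.rel, fun i => (A.args i).eval ν⟩ }

/-- A conjunctive query (`CQ` query) of arity `k`: a head vector of terms
and a body that is a finite conjunction of relational atoms. -/
structure CQ (S : Schema) (k : ℕ) : Type where
  head : Fin k → Term
  body : List (Atom S)

/-- Safety of a CQ query: the body is nonempty and every head variable
occurs in the body. -/
def CQ.Safe {k : ℕ} (Q : CQ S k) : Prop :=
  Q.body ≠ [] ∧ ∀ x, (∃ i, Q.head i = Term.var x) → ∃ A ∈ Q.body, ∃ j, A.args j = Term.var x

/-- The answer to a CQ query on an instance: images of the head vector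
under all valuations from the body to the instance. -/
def CQ.answer {k : ℕ} (Q : CQ S k) (I : Inst S) : Set (Fin k → Val) :=
  { t | ∃ ν : ℕ → Val, BodyHolds ν Q.body I ∧ t = fun i => (Q.head i).eval ν }

/-- The constants occurring in a CQ query. -/
def CQ.consts {k : ℕ} (Q : CQ S k) : Set ℕ :=
  { c | (∃ i, Q.head i = Term.const c) ∨ ∃ A ∈ Q.body, ∃ j, A.args j = Term.const c }

/-- A query of arity `k` in an arbitrary query language, identified with its semantics. -/
def GenQuery (S : Schema) (k : ℕ) : Type := Inst S → Set (Fin k → Val)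

/-- The tuple of constants corresponding to a tuple of natural numbers. -/
def constTuple {k : ℕ} (t : Fin k → ℕ) : Fin k → Val := fun i => Val.const (t i)


/-! ### Embedded dependencies: tgds and egds -/

/-- A tuple-generating dependency (tgd)
`∀ x̄ ȳ (φ(x̄,ȳ) → ∃ z̄ ψ(x̄,z̄))`: the body is `φ`; the head is `ψ`; the
existential variables are the head variables not occurring in the body. -/
structure TGD (S : Schema) : Type where
  body : List (Atom S)
  head : List (Atom S)

/-- Satisfaction of a tgd in an instance. -/
def TGD.holds (σ : TGD S) (I : Inst S) : Prop :=
  ∀ ν : ℕ → Val, BodyHolds ν σ.body I →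
    ∃ ν' : ℕ → Val, (∀ x ∈ BodyVars σ.body, ν' x = ν x) ∧ BodyHolds ν' σ.head I

/-- An equality-generating dependency (egd) `∀ x̄ (φ(x̄) → x₁ = x₂)`. -/
structure EGD (S : Schema) : Type where
  body : List (Atom S)
  lhs : ℕ
  rhs : ℕ

/-- Satisfaction of an egd in an instance. -/
def EGD.holds (σ : EGD S) (I : Inst S) : Prop :=
  ∀ ν : ℕ → Val, BodyHolds ν σ.body I → ν σ.lhs = ν σ.rhs

/-- An embedded dependency: a tgd or an egd. -/
inductive Dep (S : Schema) : Type
  | tgd : TGD S → Dep S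
  | egd : EGD S → Dep S

def Dep.holds : Dep S → Inst S → Prop
  | .tgd σ, I => σ.holds I
  | .egd σ, I => σ.holds I

/-- An instance satisfies a set of dependencies. -/
def Inst.satisfiesAll (I : Inst S) (D : Set (Dep S)) : Prop := ∀ d ∈ D, d.holds I

/-- An atom contains no constants. -/
def Atom.ConstantFree (A : Atom S) : Prop := ∀ i, ∃ x, A.args i = Term.var x

/-- A dependency without constants. -/
def Dep.ConstantFree : Dep S → Prop
  | .tgd σ => (∀ A ∈ σ.body, A.ConstantFree) ∧ (∀ A ∈ σ.head, A.ConstantFree)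
  | .egd σ => ∀ A ∈ σ.body, A.ConstantFree

/-! ### Weak acyclicity -/

/-- A position of a schema: a relation symbol together with an attribute index. -/
def Pos (S : Schema) : Type := S.rel × ℕ

/-- Variable `x` occurs in the list of atoms `B` at position `p`. -/
def OccursAt (B : List (Atom S)) (x : ℕ) (p : Pos S) : Prop :=
  ∃ A ∈ B, A.rel = p.1 ∧ ∃ i : Fin (S.arity A.rel), (i : ℕ) = p.2 ∧ A.args i = Term.var x

/-- Regular edge of the dependency graph, induced by a tgd. -/
def TGD.RegularEdge (σ : TGD S) (p q : Pos S) : Prop :=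
  ∃ x, OccursAt σ.body x p ∧ x ∈ BodyVars σ.head ∧ OccursAt σ.head x q

/-- Special edge of the dependency graph, induced by a tgd. -/
def TGD.SpecialEdge (σ : TGD S) (p q : Pos S) : Prop :=
  ∃ x y, OccursAt σ.body x p ∧ x ∈ BodyVars σ.head ∧
    y ∈ BodyVars σ.head ∧ y ∉ BodyVars σ.body ∧ OccursAt σ.head y q

/-- An edge (regular or special) of the dependency graph of a set of dependencies. -/
def DepEdge (D : Set (Dep S)) (p q : Pos S) : Prop :=
  ∃ σ : TGD S, Dep.tgd σ ∈ D ∧ (σ.RegularEdge p q ∨ σ.SpecialEdge p q)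

/-- A set of tgds and egds is weakly acyclic iff the dependency graph of its
tgds has no cycle going through a special edge. -/
def WeaklyAcyclic (D : Set (Dep S)) : Prop :=
  ¬ ∃ (σ : TGD S) (p q : Pos S), Dep.tgd σ ∈ D ∧ σ.SpecialEdge p q ∧
      Relation.ReflTransGen (DepEdge D) q p



/-! ### Views and materialized-view settings -/

/-- A finite set of views over a schema `S`: view names with arities,
each defined by a (safe) CQ query over `S`. -/
structure Views (S : Schema) : Type 1 where
  idx : Type
  finite : Finite idx
  arity : idx → ℕ
  defn : ∀ v : idx, CQ S (arity v)
  safe : ∀ v, (defn v).Safe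

/-- The view schema determined by a set of views. -/
def Views.schema {S : Schema} (V : Views S) : Schema := ⟨V.idx, V.arity⟩

/-- The image of an instance under a set of views: the instance of the view
schema assigning to each view the answer of its defining query. -/
def Views.image {S : Schema} (V : Views S) (I : Inst S) : Inst V.schema :=
  ⟨fun v => (V.defn v).answer I⟩

/-- The fixed part of a materialized-view setting: a schema `P`, a finite set `Σ`
of embedded dependencies without constants on `P`, and a set `V` of CQ views on `P`. -/
structure Frame : Type 1 where
  S : Schema
  deps : Set (Dep S)
  depsFinite : deps.Finite
  depsConstantFree : ∀ d ∈ deps, d.ConstantFree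
  views : Views S

/-- A (CQ) materialized-view setting `MΣ = (P, Σ, V, MV)`:
a frame together with a finite ground instance `MV` of the view schema. -/
structure MVSetting : Type 1 extends Frame where
  mv : Inst views.schema
  mvGround : mv.Ground
  mvFinite : mv.facts.Finite

/-- `V ⇒_{I,Σ} MV`: the ground instance `I` is a `Σ`-valid base instance
for `V` and `MV` (closed-world assumption). -/
def MVSetting.ValidBase (M : MVSetting) (I : Inst M.S) : Prop :=
  I.Ground ∧ I.satisfiesAll M.deps ∧ ∀ v, (M.views.defn v).answer I = M.mv.rels v

/-- A materialized-view setting is valid iff some `Σ`-valid base instance exists. -/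
def MVSetting.Valid (M : MVSetting) : Prop := ∃ I, M.ValidBase I

/-- The set of certain answers of a query w.r.t. a materialized-view setting. -/
def MVSetting.certain (M : MVSetting) {k : ℕ} (Q : GenQuery M.S k) : Set (Fin k → Val) :=
  { t | ∀ I, M.ValidBase I → t ∈ Q I }

/-- `consts(MΣ)`: the constants occurring in `MV` or in the view definitions. -/
def MVSetting.consts (M : MVSetting) : Set ℕ :=
  { c | (∃ p ∈ M.mv.facts, ∃ i, p.2 i = Val.const c) ∨ ∃ v, c ∈ (M.views.defn v).consts }

/-- `MΣ`-conditional containment of queries: `Q₁(I) ⊆ Q₂(I)` for every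
`Σ`-valid base instance `I` for `V` and `MV`. -/
def MVSetting.CondContained (M : MVSetting) {k : ℕ} (Q1 Q2 : GenQuery M.S k) : Prop :=
  ∀ I, M.ValidBase I → Q1 I ⊆ Q2 I

/-- The expansion query `Q₁(t̄) ← C^exp_MV`, where `C^exp_MV` is the expansion of
`MV` over the base schema: each fact of `MV` is replaced by the body of the
corresponding view definition, with head variables bound to the constants of the
fact and with nonhead variables renamed apart across the facts.  Since the
variables are renamed apart, its answer on an instance `I` is `{t̄}` exactly
when every fact of `MV` is an answer to the corresponding view on `I`
(and is empty otherwise). -/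
def MVSetting.expansionQuery (M : MVSetting) {k : ℕ} (t : Fin k → ℕ) : GenQuery M.S k :=
  fun I => { u | u = constTuple t ∧ ∀ v, M.mv.rels v ⊆ (M.views.defn v).answer I }


/-! ### Rewritings in terms of the views -/

/-- Substitution of terms for variables in a term. -/
def Term.subst (h : ℕ → Term) : Term → Term
  | .var x => h x
  | .const c => .const c

/-- The term corresponding to a value (constants to constants, nulls to variables). -/
def Val.toTerm : Val → Term
  | .const c => .const c
  | .null n => .var n

/-- `R^exp` exists and is the query `E` over the base schema:
an expansion of a rewriting `R` over the view schema is a query `E` whose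
answer on every base instance is the answer of `R` on the view image. -/
def IsExpansion {S : Schema} (V : Views S) {k : ℕ} (R : GenQuery V.schema k)
    (E : GenQuery S k) : Prop :=
  ∀ I, E I = R (V.image I)

/-- The expansion `R^exp` over the base schema of a CQ rewriting `R` over the views
of a setting, given by its semantics `R^exp(I) = R(I^{(+V)})`. -/
def MVSetting.expQuery (M : MVSetting) {k : ℕ} (R : CQ M.views.schema k) : GenQuery M.S k :=
  fun I => R.answer (M.views.image I)

/-- `R ⊑_{Σ,MV,V} Q`: the rewriting `R` is `Σ`-conditionally contained in `Q`
w.r.t. `MV` and modulo `V`, i.e., `R^exp(I) ⊆ Q(I)` for every `Σ`-valid base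
instance `I` for `V` and `MV`. -/
def MVSetting.RewContained (M : MVSetting) {k : ℕ} (R : CQ M.views.schema k)
    (Q : GenQuery M.S k) : Prop :=
  ∀ I, M.ValidBase I → M.expQuery R I ⊆ Q I

/-- A head-instantiated rewriting for a ground tuple `t̄`: a safe CQ query over the
view schema with head vector `t̄`, obtained from some safe CQ query with a
constant-free head vector by instantiating its head variables to constants
(mapping all remaining terms to themselves). -/
def IsHeadInstantiated (M : MVSetting) {k : ℕ} (t : Fin k → ℕ)
    (R : CQ M.views.schema k) : Prop :=
  R.Safe ∧ (∀ i, R.head i = Term.const (t i)) ∧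
  ∃ Rg : CQ M.views.schema k, Rg.Safe ∧ (∀ i, ∃ x, Rg.head i = Term.var x) ∧
    ∃ h : ℕ → Term,
      (∀ x, (∃ i, Rg.head i = Term.var x) → ∃ c, h x = Term.const c) ∧
      (∀ x, (¬ ∃ i, Rg.head i = Term.var x) → h x = Term.var x) ∧
      R.head = (fun i => (Rg.head i).subst h) ∧
      R.body = Rg.body.map (Atom.mapTerms (Term.subst h))

/-- A rewriting `R` is `MV`-validated iff its answer on `MV` is nonempty. -/
def MVValidated (M : MVSetting) {k : ℕ} (R : CQ M.views.schema k) : Prop :=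
  (R.answer M.mv).Nonempty

/-- The atom over the view schema corresponding to a fact of `MV`. -/
def MVSetting.factAtom (M : MVSetting) (v : M.views.idx)
    (tv : Fin (M.views.arity v) → Val) : Atom M.views.schema :=
  ⟨v, fun i => (tv i).toTerm⟩

/-- An `MV`-induced rewriting for `t̄`: a CQ rewriting with head vector `t̄`
each of whose subgoals is a fact of `MV`. -/
def IsMVInduced (M : MVSetting) {k : ℕ} (t : Fin k → ℕ) (R : CQ M.views.schema k) : Prop :=
  (∀ i, R.head i = Term.const (t i)) ∧
  ∀ A ∈ R.body, ∃ v, ∃ tv ∈ M.mv.rels v, A = M.factAtom v tv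

/-- A maximal `MV`-induced rewriting for `t̄`: an `MV`-induced rewriting for `t̄`
having every fact of `MV` as a subgoal. -/
def IsMaxMVInduced (M : MVSetting) {k : ℕ} (t : Fin k → ℕ) (R : CQ M.views.schema k) : Prop :=
  IsMVInduced M t R ∧ ∀ v, ∀ tv ∈ M.mv.rels v, M.factAtom v tv ∈ R.body


/-! ### Data exchange: canonical solutions and instance chase -/

/-- The solutions of the data-exchange setting `S^{(de)}(MΣ) = (V, P, Σ_st ∪ Σ)`
associated with a setting `MΣ`, for the source instance `MV`: a target instance `J`
such that `(MV, J)` satisfies the source-to-target tgds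
`V(x̄) → ∃ȳ body_V(x̄,ȳ)` (for each view `V`) and the target dependencies `Σ`. -/
def MVSetting.DESolution (M : MVSetting) (J : Inst M.S) : Prop :=
  J.satisfiesAll M.deps ∧ ∀ v, M.mv.rels v ⊆ (M.views.defn v).answer J

/-- A (standard) instance-chase step with a tgd: an applicable trigger whose head is
added with fresh distinct nulls for the existential variables. -/
def tgdStep {S : Schema} (σ : TGD S) (J J' : Inst S) : Prop :=
  ∃ h : ℕ → Val, BodyHolds h σ.body J ∧
    ¬ (∃ g : ℕ → Val, (∀ x ∈ BodyVars σ.body, g x = h x) ∧ BodyHolds g σ.head J) ∧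
    ∃ h' : ℕ → Val, (∀ x ∈ BodyVars σ.body, h' x = h x) ∧
      (∀ x ∈ BodyVars σ.head, x ∉ BodyVars σ.body →
        (∃ n, h' x = Val.null n) ∧ h' x ∉ J.adom) ∧
      Set.InjOn h' { x | x ∈ BodyVars σ.head ∧ x ∉ BodyVars σ.body } ∧
      J' = Inst.ofFacts (J.facts ∪ factSet σ.head h')

/-- A successful instance-chase step with an egd: a violating trigger in which at
least one of the two values is a null, which is then replaced by the other value. -/
def egdStepOk {S : Schema} (σ : EGD S) (J J' : Inst S) : Prop :=
  ∃ h : ℕ → Val, BodyHolds h σ.body J ∧ h σ.lhs ≠ h σ.rhs ∧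
    (((∃ n, h σ.lhs = Val.null n) ∧
        J' = J.map (fun a => if a = h σ.lhs then h σ.rhs else a)) ∨
     ((∃ n, h σ.rhs = Val.null n) ∧
        J' = J.map (fun a => if a = h σ.rhs then h σ.lhs else a)))

/-- A failing instance-chase step with an egd: a violating trigger equating two
distinct constants. -/
def egdStepFail {S : Schema} (σ : EGD S) (J : Inst S) : Prop :=
  ∃ h : ℕ → Val, BodyHolds h σ.body J ∧ h σ.lhs ≠ h σ.rhs ∧
    (h σ.lhs).IsConst ∧ (h σ.rhs).IsConst

/-- A successful chase step with some dependency of a set. -/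
def depStepTo {S : Schema} (D : Set (Dep S)) (J J' : Inst S) : Prop :=
  (∃ σ : TGD S, Dep.tgd σ ∈ D ∧ tgdStep σ J J') ∨
  (∃ σ : EGD S, Dep.egd σ ∈ D ∧ egdStepOk σ J J')

/-- `J` is a (terminal) result of chasing `J0` with the dependencies `D`. -/
def ChaseResult {S : Schema} (D : Set (Dep S)) (J0 J : Inst S) : Prop :=
  Relation.ReflTransGen (depStepTo D) J0 J ∧ J.satisfiesAll D

/-- The result of chasing the source instance `MV` with the source-to-target tgds
`Σ_st` of the associated data-exchange setting: for each fact `t ∈ MV[V]`, the body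
of the view definition of `V` is added, with the head variables bound to `t` and
with fresh, globally distinct nulls for the nonhead variables. -/
def MVSetting.IsPreSolution (M : MVSetting) (J : Inst M.S) : Prop :=
  ∃ ν : (v : M.views.idx) → (Fin (M.views.arity v) → Val) → ℕ → Val,
    (∀ v, ∀ t ∈ M.mv.rels v, ∀ i, ((M.views.defn v).head i).eval (ν v t) = t i) ∧
    (∀ v, ∀ t ∈ M.mv.rels v, ∀ x ∈ BodyVars (M.views.defn v).body,
      (¬ ∃ i, (M.views.defn v).head i = Term.var x) → ∃ n, ν v t x = Val.null n) ∧
    (∀ v v' t t' x x', t ∈ M.mv.rels v → t' ∈ M.mv.rels v' →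
      x ∈ BodyVars (M.views.defn v).body →
      (¬ ∃ i, (M.views.defn v).head i = Term.var x) →
      x' ∈ BodyVars (M.views.defn v').body →
      (¬ ∃ i, (M.views.defn v').head i = Term.var x') →
      ν v t x = ν v' t' x' → v = v' ∧ HEq t t' ∧ x = x') ∧
    J.facts = ⋃ v, ⋃ t ∈ M.mv.rels v, factSet (M.views.defn v).body (ν v t)

/-- `J_de^{MΣ}`: a canonical universal solution for the source instance `MV` in the
data-exchange setting associated with `MΣ`, i.e., a terminal result of chasing `MV`
with `Σ_st ∪ Σ`. -/
def MVSetting.IsCanonicalSolution (M : MVSetting) (J : Inst M.S) : Prop :=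
  ∃ J0, M.IsPreSolution J0 ∧ ChaseResult M.deps J0 J

/-! ### MV-enhanced chase (view-verified data exchange) -/

/-- Applying, to an instance, the conjunction of equalities forcing the values
`vals j` to become the values `tgt j` (a disjunct of an `MV`-induced disjunctive
egd): succeeds iff there is a substitution fixing the constants and all other
values that realizes the equalities. -/
def substResult {S : Schema} (J J' : Inst S) {k : ℕ} (vals tgt : Fin k → Val) : Prop :=
  ∃ ρ : Val → Val, (∀ c, ρ (Val.const c) = Val.const c) ∧
    (∀ a, (∀ j, a ≠ vals j) → ρ a = a) ∧ (∀ j, ρ (vals j) = tgt j) ∧ J' = J.map ρ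

/-- The values of the head vector of a CQ under a valuation. -/
def headVals {S : Schema} {k : ℕ} (Q : CQ S k) (h : ℕ → Val) : Fin k → Val :=
  fun i => (Q.head i).eval h

/-- The set of results of one chase step with the `MV`-induced generalized egd of a
view `v` on an instance `J` (with trigger `h`): one (successful) result for each
tuple of `MV[v]`, or the empty instance `ε` (here: `none`) if all disjuncts fail. -/
def MVSetting.gedResults (M : MVSetting) (v : M.views.idx) (J : Inst M.S)
    (h : ℕ → Val) : Set (Option (Inst M.S)) :=
  { o | (∃ t ∈ M.mv.rels v, ∃ J', o = some J' ∧
           substResult J J' (headVals (M.views.defn v) h) t)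
      ∨ (o = none ∧ ∀ t ∈ M.mv.rels v,
           ¬ ∃ J', substResult J J' (headVals (M.views.defn v) h) t) }

/-- The step system of the `MV`-enhanced chase with `Σ ∪ Σ^{(MΣ)}` on instances:
to each node (an instance, or the empty instance `ε` = `none`) it assigns the
possible chase steps, each step being the set of its results.  The steps are:
chase steps with the tgds and egds of `Σ`; steps with the `MV`-induced implication
constraint `body_V → false` of each view `V` with `MV[V] = ∅`; and steps with the
`MV`-induced disjunctive egd `body_V(x̄,ȳ) → ⋁_i (x̄ = t̄ᵢ)` of each view `V` of
positive arity with `MV[V] ≠ ∅`. -/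
def MVSetting.mvChaseSteps (M : MVSetting) :
    Option (Inst M.S) → Set (Set (Option (Inst M.S)))
  | none => ∅
  | some J =>
    { C | (∃ σ : TGD M.S, Dep.tgd σ ∈ M.deps ∧ ∃ J', tgdStep σ J J' ∧ C = {some J'})
        ∨ (∃ σ : EGD M.S, Dep.egd σ ∈ M.deps ∧ ∃ J', egdStepOk σ J J' ∧ C = {some J'})
        ∨ (∃ σ : EGD M.S, Dep.egd σ ∈ M.deps ∧ egdStepFail σ J ∧
             C = {(none : Option (Inst M.S))})
        ∨ (∃ v, M.mv.rels v = ∅ ∧ (∃ h, BodyHolds h (M.views.defn v).body J) ∧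
             C = {(none : Option (Inst M.S))})
        ∨ (∃ v, (M.mv.rels v).Nonempty ∧ 1 ≤ M.views.arity v ∧ ∃ h : ℕ → Val,
             BodyHolds h (M.views.defn v).body J ∧
             (∀ t ∈ M.mv.rels v, ∃ i, headVals (M.views.defn v) h i ≠ t i) ∧
             C = M.gedResults v J h) }

/-- One edge of the MV-enhanced chase: passing from a node to one of the results of
an applicable chase step. -/
def MVSetting.mvStep (M : MVSetting) (a b : Option (Inst M.S)) : Prop :=
  ∃ C ∈ M.mvChaseSteps a, b ∈ C

/-- Reachability along MV-enhanced chase steps. -/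
def MVSetting.mvReach (M : MVSetting) : Option (Inst M.S) → Option (Inst M.S) → Prop :=
  Relation.ReflTransGen M.mvStep

/-- A view-verified universal solution for `MΣ`: a nonempty leaf of a (finite)
MV-enhanced chase of a canonical universal solution `J_de^{MΣ}` with
`Σ ∪ Σ^{(MΣ)}`, i.e., a terminal nonempty instance reachable from `J_de^{MΣ}`. -/
def MVSetting.IsVVSolution (M : MVSetting) (J : Inst M.S) : Prop :=
  ∃ Jde, M.IsCanonicalSolution Jde ∧ M.mvReach (some Jde) (some J) ∧
    M.mvChaseSteps (some J) = ∅

/-- A grounded version of an instance `J`: the result of consistently replacing all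
its nulls with distinct new constants (avoiding the constants in `avoid`). -/
def GroundedVersion {S : Schema} (avoid : Set ℕ) (J J' : Inst S) : Prop :=
  ∃ ρ : Val → Val, (∀ c, ρ (Val.const c) = Val.const c) ∧
    (∀ n, ∃ c, ρ (Val.null n) = Val.const c ∧ c ∉ avoid ∧ Val.const c ∉ J.adom) ∧
    Set.InjOn ρ J.adom ∧ J' = J.map ρ

/-- Chains of a given length for a binary relation. -/
def chainOfLength {α : Type*} (R : α → α → Prop) : ℕ → α → α → Prop
  | 0, a, b => a = b
  | n + 1, a, b => ∃ c, R a c ∧ chainOfLength R n c b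


/-! ### Finitely-branching rooted trees, for chase trees -/

/-- Finite rooted trees with labels in `β`. -/
inductive RTree (β : Type) : Type
  | node : β → List (RTree β) → RTree β

namespace RTree

variable {β : Type}

/-- The label of the root. -/
def label : RTree β → β
  | .node b _ => b

mutual
  /-- The depth of a tree (a single node has depth 1). -/
  def depth : RTree β → ℕ
    | .node _ ts => depthL ts + 1
  def depthL : List (RTree β) → ℕ
    | [] => 0
    | t :: ts => max (depth t) (depthL ts)
end

mutual
  /-- The number of leaves of a tree. -/
  def leafCount : RTree β → ℕ
    | .node _ [] => 1
    | .node _ (t :: ts) => leafCount t + leafCountL ts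
  def leafCountL : List (RTree β) → ℕ
    | [] => 0
    | t :: ts => leafCount t + leafCountL ts
end

mutual
  /-- The list of labels of the leaves of a tree. -/
  def leaves : RTree β → List β
    | .node b [] => [b]
    | .node _ (t :: ts) => leaves t ++ leavesL ts
  def leavesL : List (RTree β) → List β
    | [] => []
    | t :: ts => leaves t ++ leavesL ts
end

/-- The labels of a list of trees, as a set. -/
def labelsOf (ts : List (RTree β)) : Set β := { b | ∃ t ∈ ts, label t = b }

mutual
  /-- A chase tree for a disjunctive-step system `D` (assigning to each node label
  the set of possible chase steps, each step given by the set of its results):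
  each inner node's children are exactly the results of one applicable chase step,
  and leaves are exactly the nodes to which no chase step applies. -/
  def Valid (D : β → Set (Set β)) : RTree β → Prop
    | .node b ts => (D b = ∅ ∧ ts = []) ∨
        (∃ C ∈ D b, labelsOf ts = C ∧ ValidL D ts)
  def ValidL (D : β → Set (Set β)) : List (RTree β) → Prop
    | [] => True
    | t :: ts => Valid D t ∧ ValidL D ts
end

end RTree





/-! ### CQ queries with disequalities and unions thereof -/

/-- A `CQ^≠` query: a CQ query whose body may also contain disequality atoms. -/
structure CQNeq (S : Schema) (k : ℕ) : Type where
  head : Fin k → Term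
  body : List (Atom S)
  diseqs : List (Term × Term)

/-- The answer to a `CQ^≠` query on an instance (via valuations: homomorphisms
from the relational atoms that satisfy all the disequalities). -/
def CQNeq.answer {k : ℕ} (Q : CQNeq S k) (I : Inst S) : Set (Fin k → Val) :=
  { t | ∃ ν : ℕ → Val, BodyHolds ν Q.body I ∧
      (∀ p ∈ Q.diseqs, p.1.eval ν ≠ p.2.eval ν) ∧ t = fun i => (Q.head i).eval ν }

/-- The answer to a `UCQ^≠` query (a finite set of `CQ^≠` components; the
trivial query `[]` has empty answer on every instance). -/
def ucqAnswer {k : ℕ} (R : List (CQNeq S k)) (I : Inst S) : Set (Fin k → Val) :=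
  { t | ∃ q ∈ R, t ∈ q.answer I }

/-- The terms occurring in a `CQ^≠` query. -/
def CQNeq.terms {k : ℕ} (Q : CQNeq S k) : Set Term :=
  { u | (∃ i, Q.head i = u) ∨ (∃ A ∈ Q.body, ∃ j, A.args j = u) ∨
        (∃ p ∈ Q.diseqs, p.1 = u ∨ p.2 = u) }

/-- Applying a term mapping to a `CQ^≠` query. -/
def CQNeq.mapTerms {k : ℕ} (θ : Term → Term) (Q : CQNeq S k) : CQNeq S k :=
  ⟨fun i => θ (Q.head i), Q.body.map (Atom.mapTerms θ), Q.diseqs.map fun p => (θ p.1, θ p.2)⟩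

/-- The query has the disequality atom `a ≠ b` (in either orientation). -/
def CQNeq.hasDiseq {k : ℕ} (Q : CQNeq S k) (a b : Term) : Prop :=
  (a, b) ∈ Q.diseqs ∨ (b, a) ∈ Q.diseqs

/-- A homomorphism (on the query level) from a conjunction of atoms into the
body of a `CQ^≠` query. -/
def homTo {k : ℕ} (h : ℕ → Term) (B : List (Atom S)) (Q : CQNeq S k) : Prop :=
  ∀ A ∈ B, A.mapTerms (Term.subst h) ∈ Q.body

/-- The size of an atom. -/
def Atom.size (A : Atom S) : ℕ := 1 + S.arity A.rel

/-- The size of a CQ query. -/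
def CQSize {k : ℕ} (_head : Fin k → Term) (body : List (Atom S)) : ℕ :=
  k + (body.map Atom.size).sum

def CQ.size {k : ℕ} (Q : CQ S k) : ℕ := CQSize Q.head Q.body
def CQNeq.size {k : ℕ} (Q : CQNeq S k) : ℕ := CQSize Q.head Q.body + Q.diseqs.length

/-! ### Normalization of conjunctions of atoms -/

/-- The original (renamed-apart) copy of a term: variable `x` becomes `2x`,
so that the fresh variables introduced by normalization (odd numbers) are new. -/
def Term.orig : Term → Term
  | .var x => .var (2 * x)
  | .const c => .const c

/-- The original (renamed) copy of an atom. -/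
def Atom.orig (A : Atom S) : Atom S := A.mapTerms Term.orig

/-- The argument list of an atom. -/
def Atom.argsList (A : Atom S) : List Term := List.ofFn A.args

/-- The term in position `(j, i)` of a list of atoms, if any. -/
def atomArg? (B : List (Atom S)) (j i : ℕ) : Option Term :=
  match B[j]? with
  | none => none
  | some A => A.argsList[i]?

/-- Whether the occurrence at position `(j, i)` is a duplicate occurrence,
i.e., the same variable or constant already occurs at an earlier position. -/
def isDup (B : List (Atom S)) (j i : ℕ) : Bool :=
  match atomArg? B j i with
  | none => false
  | some u =>
      (List.range B.length).any fun j' =>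
        match B[j']? with
        | none => false
        | some A' =>
            (List.range A'.argsList.length).any fun i' =>
              (decide (j' < j) || (decide (j' = j) && decide (i' < i))) &&
              decide (A'.argsList[i']? = some u)

/-- The fresh variable replacing the duplicate occurrence at position `(j, i)`. -/
def freshVar (j i : ℕ) : Term := Term.var (2 * Nat.pair j i + 1)

/-- The normalized copy of the atom at index `j` of `B`: each duplicate occurrence
of a variable or constant is replaced by a fresh distinct variable. -/
def normAtom (B : List (Atom S)) (j : ℕ) (A : Atom S) : Atom S :=
  ⟨A.rel, fun i => if isDup B j (i : ℕ) then freshVar j (i : ℕ) else (A.args i).orig⟩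

/-- `ℛ(φ⁽ⁿ⁾)`: the relational part of the normalized version of a conjunction of
atoms. -/
def normBody (B : List (Atom S)) : List (Atom S) :=
  (B.zipIdx.map Prod.swap).map fun p => normAtom B p.1 p.2

/-- `ℰ(φ⁽ⁿ⁾)`: the equality atoms of the normalized version, equating each fresh
variable with the term it replaced. -/
def normEqs (B : List (Atom S)) : List (Term × Term) :=
  ((B.zipIdx.map Prod.swap).map fun p =>
    (p.2.argsList.zipIdx.map Prod.swap).filterMap fun q =>
      if isDup B p.1 q.1 then some (freshVar p.1 q.1, q.2.orig) else none).flatten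


/-! ### Generalized dependencies and the chase of `CQ^≠` queries with `Υ_{MΣ}` -/

/-- A disjunct of the consequent of a generalized dependency: an existentially
quantified conjunction of relational atoms, a conjunction of equalities, or a
single disequality.  (`false`, as in generalized implication constraints, is
represented by the absence of disjuncts.) -/
inductive GDisj (S : Schema) : Type
  | exAtoms : List (Atom S) → GDisj S
  | eqs : List (Term × Term) → GDisj S
  | neq : Term → Term → GDisj S

/-- A generalized dependency: an antecedent (a conjunction of relational atoms)
and a finite disjunction of disjuncts. -/
structure GDep (S : Schema) : Type where
  ante : List (Atom S)
  disjs : List (GDisj S)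

variable {S : Schema} {k : ℕ}

/-- Two terms are unequal for trivial reasons (distinct constants). -/
def diseqTaut (a b : Term) : Prop :=
  ∃ c d, a = Term.const c ∧ b = Term.const d ∧ c ≠ d

/-- A disjunct is already satisfied (is a tautology) in a `CQ^≠` query under a
trigger `h` (with `av` the variables of the antecedent). -/
def disjSat (Q : CQNeq S k) (h : ℕ → Term) (av : Set ℕ) : GDisj S → Prop
  | .exAtoms ψ => ∃ h' : ℕ → Term, (∀ x ∈ av, h' x = h x) ∧
      ∀ A ∈ ψ, A.mapTerms (Term.subst h') ∈ Q.body
  | .eqs L => ∀ p ∈ L, p.1.subst h = p.2.subst h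
  | .neq a b => diseqTaut (a.subst h) (b.subst h) ∨ Q.hasDiseq (a.subst h) (b.subst h)

/-- The result of a chase step on a `CQ^≠` query with an equality conjunct:
the query is rewritten by a substitution that realizes all the equalities,
fixes the constants, and is the identity outside the terms being equated.
The step requires that none of the equated pairs be disequated in the query. -/
def eqsChild (Q : CQNeq S k) (h : ℕ → Term) (L : List (Term × Term)) (Q' : CQNeq S k) : Prop :=
  (∀ p ∈ L, ¬ Q.hasDiseq (p.1.subst h) (p.2.subst h)) ∧
  ∃ θ : Term → Term, (∀ c, θ (Term.const c) = Term.const c) ∧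
    (∀ u, (∀ p ∈ L, u ≠ p.1.subst h ∧ u ≠ p.2.subst h) → θ u = u) ∧
    (∀ p ∈ L, θ (p.1.subst h) = θ (p.2.subst h)) ∧
    (∀ u, θ u = u ∨ ∃ p ∈ L, θ u = θ (p.1.subst h)) ∧
    Q' = Q.mapTerms θ

/-- A chase step with an equality conjunct fails (e.g., it equates distinct
constants, or terms that are explicitly disequated in the query). -/
def eqsFails (Q : CQNeq S k) (h : ℕ → Term) (L : List (Term × Term)) : Prop :=
  ¬ ∃ Q', eqsChild Q h L Q'

/-- The result of a chase step with a disequality disjunct: the disequality is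
added to the query. -/
def neqChild (Q : CQNeq S k) (h : ℕ → Term) (a b : Term) (Q' : CQNeq S k) : Prop :=
  a.subst h ≠ b.subst h ∧
  Q' = ⟨Q.head, Q.body, Q.diseqs ++ [(a.subst h, b.subst h)]⟩

/-- A chase step with a disequality disjunct fails: the two sides are the same
variable or the same constant. -/
def neqFails (_Q : CQNeq S k) (h : ℕ → Term) (a b : Term) : Prop :=
  a.subst h = b.subst h

/-- The result of a chase step with an existential-atoms disjunct: the image of the
atoms is conjoined to the body, with fresh distinct variables for the
existential variables. -/
def exAtomsChild (Q : CQNeq S k) (h : ℕ → Term) (av : Set ℕ) (ψ : List (Atom S))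
    (Q' : CQNeq S k) : Prop :=
  ∃ h' : ℕ → Term, (∀ x ∈ av, h' x = h x) ∧
    (∀ x ∈ BodyVars ψ, x ∉ av → ∃ y, h' x = Term.var y ∧ Term.var y ∉ Q.terms) ∧
    Set.InjOn h' { x | x ∈ BodyVars ψ ∧ x ∉ av } ∧
    Q' = ⟨Q.head, Q.body ++ ψ.map (Atom.mapTerms (Term.subst h')), Q.diseqs⟩

/-- The (successful) results of applying one disjunct in a chase step. -/
def disjChild (Q : CQNeq S k) (h : ℕ → Term) (av : Set ℕ) :
    GDisj S → Set (Option (CQNeq S k))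
  | .exAtoms ψ => { o | ∃ Q', o = some Q' ∧ exAtomsChild Q h av ψ Q' }
  | .eqs L => { o | ∃ Q', o = some Q' ∧ eqsChild Q h L Q' }
  | .neq a b => { o | ∃ Q', o = some Q' ∧ neqChild Q h a b Q' }

/-- Whether applying a disjunct in a chase step fails. -/
def disjFails (Q : CQNeq S k) (h : ℕ → Term) : GDisj S → Prop
  | .exAtoms _ => False
  | .eqs L => eqsFails Q h L
  | .neq a b => neqFails Q h a b

/-- The set of results of one chase step with a generalized dependency `g` on a
`CQ^≠` query `Q` with trigger `h`: the successful results of the disjuncts, or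
the trivial query `ε` (= `none`) if all disjuncts fail. -/
def gdepResults (g : GDep S) (Q : CQNeq S k) (h : ℕ → Term) : Set (Option (CQNeq S k)) :=
  { o | (∃ d ∈ g.disjs, o ∈ disjChild Q h (BodyVars g.ante) d)
      ∨ (o = none ∧ ∀ d ∈ g.disjs, disjFails Q h d) }

/-- The possible chase steps with a generalized dependency on a `CQ^≠` query:
a trigger from the antecedent into the body such that no disjunct is already
satisfied, together with the resulting set of children. -/
def gdepSteps (g : GDep S) (Q : CQNeq S k) : Set (Set (Option (CQNeq S k))) :=
  { C | ∃ h : ℕ → Term, homTo h g.ante Q ∧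
      (∀ d ∈ g.disjs, ¬ disjSat Q h (BodyVars g.ante) d) ∧ C = gdepResults g Q h }

/-- The `≠`-transformation `σ_(≠)` of a tgd `σ : φ → ∃z̄ ψ`:
`ℛ(φ⁽ⁿ⁾) → (∃z̄ ψ) ∨ ¬ℰ(φ⁽ⁿ⁾)`. -/
def TGD.neqT (σ : TGD S) : GDep S :=
  ⟨normBody σ.body,
   GDisj.exAtoms (σ.head.map Atom.orig) :: (normEqs σ.body).map fun p => GDisj.neq p.1 p.2⟩

/-- The `≠`-transformation `σ_(≠)` of an egd `σ : φ → x₁ = x₂`: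
`ℛ(φ⁽ⁿ⁾) → (x₁ = x₂) ∨ ¬ℰ(φ⁽ⁿ⁾)`. -/
def EGD.neqT (σ : EGD S) : GDep S :=
  ⟨normBody σ.body,
   GDisj.eqs [((Term.var σ.lhs).orig, (Term.var σ.rhs).orig)] ::
     (normEqs σ.body).map fun p => GDisj.neq p.1 p.2⟩

/-- The `MV`-induced generalized implication constraint `ι_V` of a view `V` with
`MV[V] = ∅`:  `ℛ(φ⁽ⁿ⁾) → false ∨ ¬ℰ(φ⁽ⁿ⁾)`. -/
def MVSetting.gicDep (M : MVSetting) (v : M.views.idx) : GDep M.S :=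
  ⟨normBody (M.views.defn v).body,
   (normEqs (M.views.defn v).body).map fun p => GDisj.neq p.1 p.2⟩

/-- The equalities `x̄ = t̄` between the (normalized) head vector of a view and a
tuple of `MV`. -/
def MVSetting.gnegdPairs (M : MVSetting) (v : M.views.idx)
    (t : Fin (M.views.arity v) → Val) : List (Term × Term) :=
  List.ofFn fun i => (((M.views.defn v).head i).orig, (t i).toTerm)

/-- The possible chase steps with the `MV`-induced generalized negd `τ_V` of a view
`V` of positive arity with `MV[V] ≠ ∅`:
`ℛ(φ⁽ⁿ⁾) → ⋁_{i} (x̄ = t̄ᵢ) ∨ ¬ℰ(φ⁽ⁿ⁾)`, one equality disjunct per tuple of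
`MV[V]`. -/
def MVSetting.gnegdSteps (M : MVSetting) {k : ℕ} (v : M.views.idx) (Q : CQNeq M.S k) :
    Set (Set (Option (CQNeq M.S k))) :=
  { C | (M.mv.rels v).Nonempty ∧ 1 ≤ M.views.arity v ∧
      ∃ h : ℕ → Term, homTo h (normBody (M.views.defn v).body) Q ∧
        (∀ t ∈ M.mv.rels v,
          ¬ disjSat Q h (BodyVars (normBody (M.views.defn v).body)) (GDisj.eqs (M.gnegdPairs v t))) ∧
        (∀ p ∈ normEqs (M.views.defn v).body,
          ¬ disjSat Q h (BodyVars (normBody (M.views.defn v).body)) (GDisj.neq p.1 p.2)) ∧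
        C = { o | (∃ t ∈ M.mv.rels v,
                    o ∈ disjChild Q h (BodyVars (normBody (M.views.defn v).body))
                        (GDisj.eqs (M.gnegdPairs v t)))
               ∨ (∃ p ∈ normEqs (M.views.defn v).body,
                    o ∈ disjChild Q h (BodyVars (normBody (M.views.defn v).body))
                        (GDisj.neq p.1 p.2))
               ∨ (o = none ∧
                    (∀ t ∈ M.mv.rels v, disjFails Q h (GDisj.eqs (M.gnegdPairs v t))) ∧
                    (∀ p ∈ normEqs (M.views.defn v).body, disjFails Q h (GDisj.neq p.1 p.2))) } }

/-- The step system of the chase of `CQ^≠` queries with the dependencies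
`Υ_{MΣ} = Φ_(MV) ∪ Σ_(≠)`: steps with the `≠`-transformations of the tgds and
egds of `Σ`, with the `MV`-induced generalized implication constraints, and with
the `MV`-induced generalized negds.  (`none` is the node `ε`.) -/
def MVSetting.qSteps (M : MVSetting) (k : ℕ) :
    Option (CQNeq M.S k) → Set (Set (Option (CQNeq M.S k)))
  | none => ∅
  | some Q =>
    { C | (∃ σ : TGD M.S, Dep.tgd σ ∈ M.deps ∧ C ∈ gdepSteps σ.neqT Q)
        ∨ (∃ σ : EGD M.S, Dep.egd σ ∈ M.deps ∧ C ∈ gdepSteps σ.neqT Q)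
        ∨ (∃ v, M.mv.rels v = ∅ ∧ C ∈ gdepSteps (M.gicDep v) Q)
        ∨ (∃ v, C ∈ M.gnegdSteps v Q) }

/-- One edge of the chase of `CQ^≠` queries with `Υ_{MΣ}`. -/
def MVSetting.qStep (M : MVSetting) (k : ℕ) (a b : Option (CQNeq M.S k)) : Prop :=
  ∃ C ∈ M.qSteps k a, b ∈ C

/-- The `MΣ`-expansion `Q'` of a CQ query `Q`: the `CQ^≠` query (without
disequalities) obtained by conjoining the body of `Q` with `C^exp_MV`, the
expansion of `MV` over the base schema, in which all the variables of
`C^exp_MV` have been renamed apart from those of `Q` (the head variables of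
each view definition being bound to the constants of the corresponding fact
of `MV`, and its nonhead variables being mapped to globally distinct fresh
variables). -/
def MVSetting.IsMSExpansion (M : MVSetting) {k : ℕ} (Q : CQ M.S k) (Q' : CQNeq M.S k) : Prop :=
  Q'.head = Q.head ∧ Q'.diseqs = [] ∧
  ∃ ν : (v : M.views.idx) → (Fin (M.views.arity v) → Val) → ℕ → Term,
    (∀ v, ∀ t ∈ M.mv.rels v, ∀ i,
      ((M.views.defn v).head i).subst (ν v t) = (t i).toTerm) ∧
    (∀ v, ∀ t ∈ M.mv.rels v, ∀ x ∈ BodyVars (M.views.defn v).body,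
      (¬ ∃ i, (M.views.defn v).head i = Term.var x) →
      ∃ y, ν v t x = Term.var y ∧
        (∀ i, Q.head i ≠ Term.var y) ∧ ¬ ∃ A ∈ Q.body, ∃ j, A.args j = Term.var y) ∧
    (∀ v v' t t' x x', t ∈ M.mv.rels v → t' ∈ M.mv.rels v' →
      x ∈ BodyVars (M.views.defn v).body →
      (¬ ∃ i, (M.views.defn v).head i = Term.var x) →
      x' ∈ BodyVars (M.views.defn v').body →
      (¬ ∃ i, (M.views.defn v').head i = Term.var x') →
      ν v t x = ν v' t' x' → v = v' ∧ HEq t t' ∧ x = x') ∧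
    { A | A ∈ Q'.body } =
      { A | A ∈ Q.body } ∪
      { A | ∃ v, ∃ t ∈ M.mv.rels v, ∃ A0 ∈ (M.views.defn v).body,
              A = A0.mapTerms (Term.subst (ν v t)) }

/-- `R` is a chase result `(Q)^{MΣ}` of the `CQ^≠` query `Q0` with `Υ_{MΣ}`:
the `UCQ^≠` query whose components are the non-`ε` leaves of a (finite) chase
tree for `MΣ` and `Q0`. -/
def MVSetting.IsChaseResult (M : MVSetting) {k : ℕ} (Q0 : CQNeq M.S k)
    (R : List (CQNeq M.S k)) : Prop :=
  ∃ T : RTree (Option (CQNeq M.S k)), T.label = some Q0 ∧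
    RTree.Valid (M.qSteps k) T ∧ R = T.leaves.filterMap id


/-! ### Complexity: polynomial time, `Π^p_2`, and concrete problem encodings -/

/-- A polynomial-time computable function on natural numbers (under the standard
binary encoding), via Mathlib's Turing-machine model. -/
def PTimeFun (f : ℕ → ℕ) : Prop :=
  Nonempty (Turing.TM2ComputableInPolyTime
    Computability.encodingNatBool.encode Computability.encodingNatBool.encode f)

/-- Pairing of three inputs into one. -/
def tripleCode (x y z : ℕ) : ℕ := Nat.pair x (Nat.pair y z)

/-- Membership in `Π^p_2` (the second level of the polynomial hierarchy) of a
language of (binary-encoded) natural numbers: a `∀∃` certificate characterization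
with polynomial certificate bounds and a polynomial-time verifier. -/
def InPi2P (L : Set ℕ) : Prop :=
  ∃ (c : ℕ) (f : ℕ → ℕ), PTimeFun f ∧
    ∀ x, x ∈ L ↔ ∀ y, Nat.size y ≤ (Nat.size x + 1) ^ c →
      ∃ z, Nat.size z ≤ (Nat.size x + 1) ^ c ∧ f (tripleCode x y z) = 1

/-- Polynomial-time many-one reducibility. -/
def PolyReduces (A B : Set ℕ) : Prop :=
  ∃ f : ℕ → ℕ, PTimeFun f ∧ ∀ x, x ∈ A ↔ f x ∈ B

/-- `Π^p_2`-hardness of a language. -/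
def Pi2PHard (L : Set ℕ) : Prop := ∀ A, InPi2P A → PolyReduces A L

instance : Encodable Term :=
  Encodable.ofEquiv (ℕ ⊕ ℕ)
    { toFun := fun t => match t with | .var x => .inl x | .const c => .inr c
      invFun := fun s => match s with | .inl x => .var x | .inr c => .const c
      left_inv := fun t => by cases t <;> rfl
      right_inv := fun s => by cases s <;> rfl }

/-- A concrete schema: relation symbols `0, …, m-1` with given arities. -/
structure CSchema : Type where
  m : ℕ
  ar : Fin m → ℕ

/-- The schema denoted by a concrete schema. -/
abbrev CSchema.toSchema (C : CSchema) : Schema := ⟨Fin C.m, C.ar⟩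

/-- A concrete finite set of views over a concrete schema:
view names `0, …, l-1` with arities, defined by safe CQ queries. -/
structure CViews (C : CSchema) : Type where
  l : ℕ
  var : Fin l → ℕ
  defn : ∀ v : Fin l, CQ C.toSchema (var v)
  safe : ∀ v, (defn v).Safe

/-- The set of views denoted by a concrete set of views. -/
def CViews.toViews {C : CSchema} (W : CViews C) : Views C.toSchema :=
  ⟨Fin W.l, inferInstance, W.var, W.defn, W.safe⟩

/-- The concrete syntax of an atom over a concrete schema. -/
def Atom.syn {C : CSchema} (A : Atom C.toSchema) : ℕ × List Term :=
  (A.rel.val, List.ofFn A.args)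

/-- The concrete syntax of a CQ query over a concrete schema. -/
def CQ.syn {C : CSchema} {k : ℕ} (Q : CQ C.toSchema k) : List Term × List (ℕ × List Term) :=
  (List.ofFn Q.head, Q.body.map Atom.syn)

/-- The ground instance of the view schema denoted by a concrete list of view facts
(each a view index together with a list of constants). -/
def mvDen {C : CSchema} (W : CViews C) (L : List (ℕ × List ℕ)) : Inst W.toViews.schema :=
  ⟨fun v => { t | ∃ e ∈ L, e.1 = v.val ∧ ∃ hl : e.2.length = W.var v,
      t = fun i => Val.const (e.2.get (Fin.cast hl.symm i)) }⟩

/-- The certain-query-answer problem, as a language: the fixed parts are a schema,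
a set of dependencies, and the view definitions; the input is (an encoding of) a
CQ query `Q`, a ground tuple `t̄` of length equal to the arity of `Q`, and a set of
view answers `MV`, and the yes-instances are those in which `t̄` is a certain
answer to `Q` w.r.t. the setting `(P, Σ, V, MV)`. -/
def certLang (C : CSchema) (W : CViews C) (ds : Set (Dep C.toSchema))
    (h1 : ds.Finite) (h2 : ∀ d ∈ ds, d.ConstantFree) : Set ℕ :=
  { n | ∃ (k : ℕ) (Q : CQ C.toSchema k) (t : Fin k → ℕ) (L : List (ℕ × List ℕ)),
      n = Encodable.encode (Q.syn, List.ofFn t, L) ∧ Q.Safe ∧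
      ∃ (hg : (mvDen W L).Ground) (hf : (mvDen W L).facts.Finite),
        constTuple t ∈
          (MVSetting.mk (Frame.mk C.toSchema ds h1 h2 W.toViews) (mvDen W L) hg hf).certain
            Q.answer }

/-- The `MΣ`-conditional-containment problem, as a language: the fixed parts are a
schema, a set of dependencies, and the view definitions; the input is (an encoding
of) two CQ queries `Q₁, Q₂` of the same arity and a set of view answers `MV`, and
the yes-instances are those in which `Q₁ ⊑_{MΣ} Q₂` for the setting
`(P, Σ, V, MV)`. -/
def contLang (C : CSchema) (W : CViews C) (ds : Set (Dep C.toSchema))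
    (h1 : ds.Finite) (h2 : ∀ d ∈ ds, d.ConstantFree) : Set ℕ :=
  { n | ∃ (k : ℕ) (Q1 Q2 : CQ C.toSchema k) (L : List (ℕ × List ℕ)),
      n = Encodable.encode (Q1.syn, Q2.syn, L) ∧ Q1.Safe ∧ Q2.Safe ∧
      ∃ (hg : (mvDen W L).Ground) (hf : (mvDen W L).facts.Finite),
        (MVSetting.mk (Frame.mk C.toSchema ds h1 h2 W.toViews) (mvDen W L) hg hf).CondContained
          Q1.answer Q2.answer }

/-!
Each chase step only adds atoms, adds a disequality, or identifies terms by a substitution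
fixing the constants, so every child of a node is unconditionally contained in it; hence every
leaf of the chase tree is contained in `Q'`, whose body contains that of `Q`.

Conversely, let `I` be a `Σ`-valid base instance. A valuation of a node into `I` can be
continued into some child of every applicable step: either it breaks one of the equalities
`ℰ(φ⁽ⁿ⁾)` of the normalized antecedent, and the matching disequality disjunct keeps it, or it
yields a trigger of the original antecedent in `I`, and then `I ⊨ Σ`, resp. `V(I) = MV`,
supplies a disjunct it satisfies (the head atoms with fresh variables, the equalities of an
egd, or the tuple of `MV` matched by the view head). Since the expansion atoms are renamed
apart and every fact of `MV` has a witness in `I`, every answer of `Q` on `I` is an answer of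
`Q'`, and following the continued valuation reaches a leaf.
-/

namespace RTree

variable {β : Type}

theorem mem_leavesL {ts : List (RTree β)} {q : β} :
    q ∈ leavesL ts ↔ ∃ T ∈ ts, q ∈ T.leaves := by
  induction ts with
  | nil => simp [leavesL]
  | cons T ts ih => simp [leavesL, ih]

theorem mem_leaves_node {b q : β} {ts : List (RTree β)} :
    q ∈ (node b ts).leaves ↔ (ts = [] ∧ q = b) ∨ ∃ T ∈ ts, q ∈ T.leaves := by
  cases ts with
  | nil => simp [leaves]
  | cons T ts => simp [leaves, mem_leavesL]

theorem validL_iff {D : β → Set (Set β)} {ts : List (RTree β)} :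
    ValidL D ts ↔ ∀ T ∈ ts, Valid D T := by
  induction ts with
  | nil => simp [ValidL]
  | cons T ts ih => simp [ValidL, ih]

theorem Valid.forall_mem_leaves {D : β → Set (Set β)} {P : β → Prop}
    (hP : ∀ b, P b → ∀ C ∈ D b, ∀ c ∈ C, P c) :
    ∀ {T : RTree β}, Valid D T → P T.label → ∀ q ∈ T.leaves, P q
  | node b ts, hT, hb, q, hq => by
    rcases mem_leaves_node.1 hq with ⟨-, rfl⟩ | ⟨T, hTts, hqT⟩
    · exact hb
    rw [Valid] at hT
    rcases hT with ⟨-, rfl⟩ | ⟨C, hC, hlabels, hvalid⟩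
    · cases hTts
    have hTC : T.label ∈ C := hlabels ▸ ⟨T, hTts, rfl⟩
    exact (validL_iff.1 hvalid T hTts).forall_mem_leaves hP (hP b hb C hC _ hTC) q hqT
termination_by T => T
decreasing_by exact List.sizeOf_lt_of_mem hTts |>.trans (by simp)

theorem Valid.exists_mem_leaves {D : β → Set (Set β)} {P : β → Prop}
    (hP : ∀ b, P b → ∀ C ∈ D b, ∃ c ∈ C, P c) :
    ∀ {T : RTree β}, Valid D T → P T.label → ∃ q ∈ T.leaves, P q
  | node b ts, hT, hb => by
    rw [Valid] at hT
    rcases hT with ⟨-, rfl⟩ | ⟨C, hC, hlabels, hvalid⟩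
    · exact ⟨b, by simp [leaves], hb⟩
    obtain ⟨c, hcC, hc⟩ := hP b hb C hC
    rw [← hlabels] at hcC
    obtain ⟨T, hTts, rfl⟩ := hcC
    obtain ⟨q, hqT, hq⟩ := (validL_iff.1 hvalid T hTts).exists_mem_leaves hP hc
    exact ⟨q, mem_leaves_node.2 (.inr ⟨T, hTts, hqT⟩), hq⟩
termination_by T => T
decreasing_by exact List.sizeOf_lt_of_mem hTts |>.trans (by simp)

end RTree

namespace Term

theorem eval_congr {ν₁ ν₂ : ℕ → Val} (u : Term) (h : ∀ y, u = var y → ν₁ y = ν₂ y) :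
    u.eval ν₁ = u.eval ν₂ := by
  cases u with
  | var x => exact h x rfl
  | const c => rfl

theorem eval_subst (h : ℕ → Term) (ν : ℕ → Val) (u : Term) :
    (u.subst h).eval ν = u.eval fun x => (h x).eval ν := by
  cases u <;> rfl

theorem eval_orig_subst (h : ℕ → Term) (ν : ℕ → Val) (u : Term) :
    (u.orig.subst h).eval ν = u.eval fun x => (h (2 * x)).eval ν := by
  cases u <;> rfl

end Term

/-- A term denoting `w` under `ν`; junk when no term does. -/
noncomputable def Val.toTermAt (ν : ℕ → Val) : Val → Term
  | .const c => .const c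
  | .null n => .var (Function.invFun ν (.null n))

theorem Val.eval_toTermAt (ν : ℕ → Val) (u : Term) :
    ((u.eval ν).toTermAt ν).eval ν = u.eval ν := by
  cases u with
  | const c => rfl
  | var x =>
    cases hx : ν x with
    | const c => simp [Term.eval, hx, toTermAt]
    | null n => simpa [Term.eval, hx, toTermAt] using Function.invFun_eq ⟨x, hx⟩

theorem CQNeq.exists_var_bound (Q : CQNeq S k) : ∃ N, ∀ y, Term.var y ∈ Q.terms → y < N := by
  have hfin : Q.terms.Finite := by
    refine Set.Finite.subset ((Set.finite_range Q.head).union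
      (((List.finite_toSet Q.body).biUnion fun A _ => Set.finite_range A.args).union
        ((List.finite_toSet Q.diseqs).biUnion fun p _ => ({p.1, p.2} : Set Term).toFinite))) ?_
    rintro u (⟨i, rfl⟩ | ⟨A, hA, j, rfl⟩ | ⟨p, hp, rfl | rfl⟩)
    · exact .inl ⟨i, rfl⟩
    · exact .inr (.inl (Set.mem_biUnion hA ⟨j, rfl⟩))
    all_goals exact .inr (.inr (Set.mem_biUnion hp (by simp)))
  obtain ⟨N, hN⟩ := (hfin.preimage (fun _ _ _ _ h => Term.var.inj h)).bddAbove
  exact ⟨N + 1, fun y hy => Nat.lt_succ_of_le (hN hy)⟩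

theorem mem_terms_of_homTo {h : ℕ → Term} {B : List (Atom S)} {Q : CQNeq S k}
    (hhom : homTo h B Q) {x : ℕ} (hx : x ∈ BodyVars B) : h x ∈ Q.terms := by
  obtain ⟨A, hA, j, hj⟩ := hx
  exact .inr (.inl ⟨_, hhom A hA, j, by simp [Atom.mapTerms, hj, Term.subst]⟩)

namespace CQNeq

variable {Q Q' : CQNeq S k} {I : Inst S}

theorem answer_subset_of_subset (hhead : Q'.head = Q.head) (hbody : Q.body ⊆ Q'.body)
    (hdiseqs : Q.diseqs ⊆ Q'.diseqs) : Q'.answer I ⊆ Q.answer I := by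
  rintro _ ⟨ν, hν, hdis, rfl⟩
  exact ⟨ν, fun A hA => hν A (hbody hA), fun p hp => hdis p (hdiseqs hp), by rw [hhead]⟩

theorem answer_mapTerms_subset {θ : Term → Term} (hθ : ∀ c, θ (.const c) = .const c) :
    (Q.mapTerms θ).answer I ⊆ Q.answer I := by
  rintro _ ⟨ν, hν, hdis, rfl⟩
  have key : ∀ u : Term, u.eval (fun x => (θ (.var x)).eval ν) = (θ u).eval ν := by
    rintro (x | c)
    · rfl
    · rw [hθ]; rfl
  refine ⟨fun x => (θ (.var x)).eval ν, fun A hA => ?_, fun p hp => ?_, by simp [key, mapTerms]⟩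
  · have hargs : (fun i => (A.args i).eval fun x => (θ (.var x)).eval ν) =
        fun i => ((A.mapTerms θ).args i).eval ν := funext fun i => key _
    rw [hargs]
    exact hν _ (List.mem_map_of_mem hA)
  · simpa [key] using hdis _ (List.mem_map_of_mem (f := fun p : Term × Term => (θ p.1, θ p.2)) hp)

theorem mem_answer_mapTerms {θ : Term → Term} {ν : ℕ → Val} (hν : BodyHolds ν Q.body I)
    (hdis : ∀ p ∈ Q.diseqs, p.1.eval ν ≠ p.2.eval ν) (hθ : ∀ u, (θ u).eval ν = u.eval ν) :
    (fun i => (Q.head i).eval ν) ∈ (Q.mapTerms θ).answer I := by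
  refine ⟨ν, ?_, ?_, by simp [hθ, mapTerms]⟩
  · intro A hA
    obtain ⟨A₀, hA₀, rfl⟩ := List.mem_map.1 hA
    have hargs : (fun i => ((A₀.mapTerms θ).args i).eval ν) = fun i => (A₀.args i).eval ν :=
      funext fun i => hθ _
    rw [hargs]
    exact hν A₀ hA₀
  · intro p hp
    obtain ⟨p₀, hp₀, rfl⟩ := List.mem_map.1 hp
    simpa [hθ] using hdis p₀ hp₀

end CQNeq

section ChaseChildren

variable {Q Q' : CQNeq S k} {I : Inst S} {h : ℕ → Term} {ν : ℕ → Val}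

theorem answer_subset_of_mem_disjChild {av : Set ℕ} {d : GDisj S}
    (hd : some Q' ∈ disjChild Q h av d) : Q'.answer I ⊆ Q.answer I := by
  cases d with
  | exAtoms ψ =>
    obtain ⟨_, ⟨⟩, _, -, -, -, rfl⟩ := hd
    exact CQNeq.answer_subset_of_subset rfl (List.subset_append_left _ _) (List.Subset.refl _)
  | eqs L =>
    obtain ⟨_, ⟨⟩, -, θ, hθ, -, -, -, rfl⟩ := hd
    exact CQNeq.answer_mapTerms_subset hθ
  | neq a b =>
    obtain ⟨_, ⟨⟩, -, rfl⟩ := hd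
    exact CQNeq.answer_subset_of_subset rfl (List.Subset.refl _) (List.subset_append_left _ _)

theorem exists_neqChild_mem_answer (hν : BodyHolds ν Q.body I)
    (hdis : ∀ p ∈ Q.diseqs, p.1.eval ν ≠ p.2.eval ν) {a b : Term}
    (hne : (a.subst h).eval ν ≠ (b.subst h).eval ν) :
    ∃ Q', neqChild Q h a b Q' ∧ (fun i => (Q.head i).eval ν) ∈ Q'.answer I := by
  refine ⟨_, ⟨fun hab => hne (by rw [hab]), rfl⟩, ν, hν, fun p hp => ?_, rfl⟩
  rcases List.mem_append.1 hp with hp | hp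
  · exact hdis p hp
  · rw [List.mem_singleton.1 hp]
    exact hne

/-- Every equated term is replaced by a term denoting its value under `ν`; since the
equalities hold under `ν`, this realizes them without changing any value. -/
theorem exists_eqsChild_mem_answer (hν : BodyHolds ν Q.body I)
    (hdis : ∀ p ∈ Q.diseqs, p.1.eval ν ≠ p.2.eval ν) {L : List (Term × Term)}
    (heq : ∀ p ∈ L, (p.1.subst h).eval ν = (p.2.subst h).eval ν) :
    ∃ Q', eqsChild Q h L Q' ∧ (fun i => (Q.head i).eval ν) ∈ Q'.answer I := by
  classical
  let E : Set Term := {u | ∃ p ∈ L, u = p.1.subst h ∨ u = p.2.subst h}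
  let θ : Term → Term := fun u => if u ∈ E then (u.eval ν).toTermAt ν else u
  have hθE : ∀ u ∈ E, θ u = (u.eval ν).toTermAt ν := fun u hu => if_pos hu
  have hθ : ∀ u, (θ u).eval ν = u.eval ν := by
    intro u
    by_cases hu : u ∈ E
    · rw [hθE u hu, Val.eval_toTermAt]
    · simp only [θ, if_neg hu]
  refine ⟨Q.mapTerms θ, ⟨?_, θ, ?_, ?_, ?_, ?_, rfl⟩, CQNeq.mem_answer_mapTerms hν hdis hθ⟩
  · rintro p hp (hmem | hmem)
    · exact hdis _ hmem (heq p hp)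
    · exact hdis _ hmem (heq p hp).symm
  · intro c
    by_cases hc : Term.const c ∈ E
    · rw [hθE _ hc]; rfl
    · exact if_neg hc
  · rintro u hu
    refine if_neg ?_
    rintro ⟨p, hp, rfl | rfl⟩
    exacts [(hu p hp).1 rfl, (hu p hp).2 rfl]
  · intro p hp
    rw [hθE _ ⟨p, hp, .inl rfl⟩, hθE _ ⟨p, hp, .inr rfl⟩, heq p hp]
  · intro u
    by_cases hu : u ∈ E
    · obtain ⟨p, hp, hup⟩ := hu
      refine .inr ⟨p, hp, ?_⟩
      rw [hθE u ⟨p, hp, hup⟩, hθE _ ⟨p, hp, .inl rfl⟩]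
      rcases hup with rfl | rfl
      · rfl
      · rw [heq p hp]
    · exact .inl (if_neg hu)

/-- The fresh variables are shifted above all variables of `Q`, and `ν` is extended there
by `μ`. -/
theorem exists_exAtomsChild_mem_answer (hν : BodyHolds ν Q.body I)
    (hdis : ∀ p ∈ Q.diseqs, p.1.eval ν ≠ p.2.eval ν) {av : Set ℕ} {ψ : List (Atom S)}
    (hav : ∀ x ∈ av, x ∈ BodyVars ψ → h x ∈ Q.terms) {μ : ℕ → Val} (hμ : BodyHolds μ ψ I)
    (hμav : ∀ x ∈ av, x ∈ BodyVars ψ → μ x = (h x).eval ν) :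
    ∃ Q', exAtomsChild Q h av ψ Q' ∧ (fun i => (Q.head i).eval ν) ∈ Q'.answer I := by
  classical
  obtain ⟨N, hN⟩ := Q.exists_var_bound
  let h' : ℕ → Term := fun x => if x ∈ av then h x else .var (x + N)
  let ν' : ℕ → Val := fun y => if N ≤ y then μ (y - N) else ν y
  have hν'Q : ∀ u ∈ Q.terms, u.eval ν' = u.eval ν := fun u hu =>
    u.eval_congr fun y hy => if_neg (by have := hN y (hy ▸ hu); omega)
  have hψ : ∀ A ∈ ψ, ∀ i, ((A.args i).subst h').eval ν' = (A.args i).eval μ := by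
    intro A hA i
    cases hAi : A.args i with
    | const c => rfl
    | var x =>
      have hx : x ∈ BodyVars ψ := ⟨A, hA, i, hAi⟩
      by_cases hxav : x ∈ av
      · change (h' x).eval ν' = μ x
        rw [show h' x = h x from if_pos hxav, hν'Q _ (hav x hxav hx), hμav x hxav hx]
      · simp [Term.subst, h', ν', hxav, Term.eval]
  refine ⟨_, ⟨h', fun x hx => if_pos hx, fun x _ hx => ⟨x + N, if_neg hx, fun hmem => ?_⟩,
    fun x hx y hy hxy => ?_, rfl⟩, ν', fun A hA => ?_, fun p hp => ?_, ?_⟩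
  · have := hN _ hmem; omega
  · simp only [h', if_neg hx.2, if_neg hy.2, Term.var.injEq] at hxy
    omega
  · rcases List.mem_append.1 hA with hA | hA
    · have hargs : (fun i => (A.args i).eval ν') = fun i => (A.args i).eval ν :=
        funext fun i => hν'Q _ (.inr (.inl ⟨A, hA, i, rfl⟩))
      rw [hargs]
      exact hν A hA
    · obtain ⟨A₀, hA₀, rfl⟩ := List.mem_map.1 hA
      have hargs : (fun i => ((A₀.mapTerms (Term.subst h')).args i).eval ν') =
          fun i => (A₀.args i).eval μ := funext (hψ A₀ hA₀)
      rw [hargs]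
      exact hμ A₀ hA₀
  · rw [hν'Q _ (.inr (.inr ⟨p, hp, .inl rfl⟩)), hν'Q _ (.inr (.inr ⟨p, hp, .inr rfl⟩))]
    exact hdis p hp
  · exact funext fun i => (hν'Q _ (.inl ⟨i, rfl⟩)).symm

end ChaseChildren

theorem mem_normBody {B : List (Atom S)} {A' : Atom S} :
    A' ∈ normBody B ↔ ∃ j A, B[j]? = some A ∧ normAtom B j A = A' := by
  simpa [normBody, List.mk_mem_zipIdx_iff_getElem?] using exists_comm

theorem Atom.argsList_getElem? (A : Atom S) (i : Fin (S.arity A.rel)) :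
    A.argsList[(i : ℕ)]? = some (A.args i) := by
  simp [Atom.argsList]

theorem mem_normEqs {B : List (Atom S)} {j : ℕ} {A : Atom S} (hA : B[j]? = some A)
    {i : Fin (S.arity A.rel)} (hdup : isDup B j i = true) :
    (freshVar j i, (A.args i).orig) ∈ normEqs B := by
  simp only [normEqs, List.mem_flatten, List.mem_map]
  refine ⟨_, ⟨(j, A), ⟨(A, j), List.mk_mem_zipIdx_iff_getElem?.2 hA, rfl⟩, rfl⟩,
    List.mem_filterMap.2 ⟨(i, A.args i),
      List.mem_map.2 ⟨(A.args i, i),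
        List.mk_mem_zipIdx_iff_getElem?.2 (A.argsList_getElem? i), rfl⟩,
      by simp [hdup]⟩⟩

theorem bodyHolds_of_homTo_normBody {B : List (Atom S)} {Q : CQNeq S k} {I : Inst S}
    {h : ℕ → Term} {ν : ℕ → Val} (hhom : homTo h (normBody B) Q) (hν : BodyHolds ν Q.body I)
    (heqs : ∀ p ∈ normEqs B, (p.1.subst h).eval ν = (p.2.subst h).eval ν) :
    BodyHolds (fun x => (h (2 * x)).eval ν) B I := by
  intro A hA
  obtain ⟨j, hj⟩ := List.mem_iff_getElem?.1 hA
  have hargs : (fun i => (((normAtom B j A).mapTerms (Term.subst h)).args i).eval ν) =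
      fun i => (A.args i).eval fun x => (h (2 * x)).eval ν := by
    funext i
    change ((if isDup B j i then freshVar j i else (A.args i).orig).subst h).eval ν = _
    split_ifs with hdup
    · rw [heqs _ (mem_normEqs hj hdup), Term.eval_orig_subst]
    · rw [Term.eval_orig_subst]
  rw [← hargs]
  exact hν _ (hhom _ (mem_normBody.2 ⟨j, A, hj, rfl⟩))

theorem mem_bodyVars_of_two_mul_mem_bodyVars_normBody {B : List (Atom S)} {x : ℕ}
    (hx : 2 * x ∈ BodyVars (normBody B)) : x ∈ BodyVars B := by
  obtain ⟨_, hA', i, hi⟩ := hx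
  obtain ⟨j, A, hj, rfl⟩ := mem_normBody.1 hA'
  change (if isDup B j i then freshVar j i else (A.args i).orig) = _ at hi
  split_ifs at hi
  · simp only [freshVar, Term.var.injEq] at hi
    omega
  · refine ⟨A, List.mem_of_getElem? hj, i, ?_⟩
    cases hAi : A.args i with
    | var y =>
      simp only [hAi, Term.orig, Term.var.injEq] at hi
      rw [show y = x by omega]
    | const c => simp [hAi, Term.orig] at hi

theorem bodyHolds_map_orig {B : List (Atom S)} {μ : ℕ → Val} {I : Inst S}
    (hμ : BodyHolds μ B I) : BodyHolds (fun y => μ (y / 2)) (B.map Atom.orig) I := by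
  intro A hA
  obtain ⟨A₀, hA₀, rfl⟩ := List.mem_map.1 hA
  have hargs : (fun i => (A₀.orig.args i).eval fun y => μ (y / 2)) =
      fun i => (A₀.args i).eval μ := by
    funext i
    change (A₀.args i).orig.eval _ = _
    cases A₀.args i with
    | var x => simp [Term.orig, Term.eval]
    | const c => rfl
  rw [hargs]
  exact hμ A₀ hA₀

theorem exists_eq_two_mul_of_mem_bodyVars_map_orig {B : List (Atom S)} {x : ℕ}
    (hx : x ∈ BodyVars (B.map Atom.orig)) : ∃ z ∈ BodyVars B, x = 2 * z := by
  obtain ⟨_, hA, i, hi⟩ := hx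
  obtain ⟨A, hAB, rfl⟩ := List.mem_map.1 hA
  change (A.args i).orig = _ at hi
  cases hAi : A.args i with
  | var z =>
    simp only [hAi, Term.orig, Term.var.injEq] at hi
    exact ⟨z, ⟨A, hAB, i, hAi⟩, hi.symm⟩
  | const c => simp [hAi, Term.orig] at hi

def nodeAnswer : Option (CQNeq S k) → Inst S → Set (Fin k → Val)
  | none, _ => ∅
  | some Q, I => Q.answer I

theorem mem_ucqAnswer_filterMap_id {L : List (Option (CQNeq S k))} {I : Inst S}
    {t : Fin k → Val} : t ∈ ucqAnswer (L.filterMap id) I ↔ ∃ o ∈ L, t ∈ nodeAnswer o I := by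
  constructor
  · rintro ⟨Q, hQ, ht⟩
    exact ⟨some Q, by simpa using hQ, ht⟩
  · rintro ⟨_ | Q, hQ, ht⟩
    · exact ht.elim
    · exact ⟨Q, by simpa using hQ, ht⟩

section ChaseSteps

variable {Q Q' : CQNeq S k} {I : Inst S} {h : ℕ → Term} {ν : ℕ → Val}

theorem answer_subset_of_mem_gdepResults {g : GDep S} (hQ' : some Q' ∈ gdepResults g Q h) :
    Q'.answer I ⊆ Q.answer I := by
  rcases hQ' with ⟨d, -, hd⟩ | ⟨⟨⟩, -⟩
  exact answer_subset_of_mem_disjChild hd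

/-- The dichotomy behind the `≠`-transformation: a trigger on the normalized body either
breaks one of its equalities, and then the disequality disjunct keeps the answer, or it
is a trigger on the original body. -/
theorem exists_neqChild_mem_answer_or_bodyHolds {B : List (Atom S)}
    (hhom : homTo h (normBody B) Q) (hν : BodyHolds ν Q.body I)
    (hdis : ∀ p ∈ Q.diseqs, p.1.eval ν ≠ p.2.eval ν) :
    (∃ p ∈ normEqs B, ∃ Q', neqChild Q h p.1 p.2 Q' ∧ (fun i => (Q.head i).eval ν) ∈ Q'.answer I)
      ∨ BodyHolds (fun x => (h (2 * x)).eval ν) B I := by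
  by_cases heqs : ∀ p ∈ normEqs B, (p.1.subst h).eval ν = (p.2.subst h).eval ν
  · exact .inr (bodyHolds_of_homTo_normBody hhom hν heqs)
  · obtain ⟨p, hp, hne⟩ := not_forall₂.1 heqs
    exact .inl ⟨p, hp, exists_neqChild_mem_answer hν hdis hne⟩

theorem TGD.exists_mem_gdepResults_mem_answer {σ : TGD S} (hσ : σ.holds I)
    (hhom : homTo h (normBody σ.body) Q) (hν : BodyHolds ν Q.body I)
    (hdis : ∀ p ∈ Q.diseqs, p.1.eval ν ≠ p.2.eval ν) :
    ∃ Q', some Q' ∈ gdepResults σ.neqT Q h ∧ (fun i => (Q.head i).eval ν) ∈ Q'.answer I := by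
  rcases exists_neqChild_mem_answer_or_bodyHolds hhom hν hdis with ⟨p, hp, Q', hQ', hans⟩ | hκ
  · exact ⟨Q', .inl ⟨_, List.mem_cons_of_mem _ (List.mem_map_of_mem hp), Q', rfl, hQ'⟩, hans⟩
  obtain ⟨μ, hμκ, hμ⟩ := hσ _ hκ
  obtain ⟨Q', hQ', hans⟩ := exists_exAtomsChild_mem_answer hν hdis
    (fun x hx _ => mem_terms_of_homTo hhom hx) (bodyHolds_map_orig hμ) fun x hx hxψ => by
      obtain ⟨z, -, rfl⟩ := exists_eq_two_mul_of_mem_bodyVars_map_orig hxψ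
      rw [Nat.mul_div_cancel_left z two_pos,
        hμκ z (mem_bodyVars_of_two_mul_mem_bodyVars_normBody hx)]
  exact ⟨Q', .inl ⟨_, List.mem_cons_self, Q', rfl, hQ'⟩, hans⟩

theorem EGD.exists_mem_gdepResults_mem_answer {σ : EGD S} (hσ : σ.holds I)
    (hhom : homTo h (normBody σ.body) Q) (hν : BodyHolds ν Q.body I)
    (hdis : ∀ p ∈ Q.diseqs, p.1.eval ν ≠ p.2.eval ν) :
    ∃ Q', some Q' ∈ gdepResults σ.neqT Q h ∧ (fun i => (Q.head i).eval ν) ∈ Q'.answer I := by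
  rcases exists_neqChild_mem_answer_or_bodyHolds hhom hν hdis with ⟨p, hp, Q', hQ', hans⟩ | hκ
  · exact ⟨Q', .inl ⟨_, List.mem_cons_of_mem _ (List.mem_map_of_mem hp), Q', rfl, hQ'⟩, hans⟩
  obtain ⟨Q', hQ', hans⟩ := exists_eqsChild_mem_answer (h := h) hν hdis
    (L := [((Term.var σ.lhs).orig, (Term.var σ.rhs).orig)]) fun p hp => by
      rw [List.mem_singleton.1 hp]
      exact hσ _ hκ
  exact ⟨Q', .inl ⟨_, List.mem_cons_self, Q', rfl, hQ'⟩, hans⟩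

end ChaseSteps

namespace MVSetting

variable {M : MVSetting} {Q : CQNeq M.S k} {I : Inst M.S} {h : ℕ → Term} {ν : ℕ → Val}

theorem exists_mem_gdepResults_gicDep_mem_answer {v : M.views.idx} (hempty : M.mv.rels v = ∅)
    (hv : (M.views.defn v).answer I ⊆ M.mv.rels v)
    (hhom : homTo h (normBody (M.views.defn v).body) Q) (hν : BodyHolds ν Q.body I)
    (hdis : ∀ p ∈ Q.diseqs, p.1.eval ν ≠ p.2.eval ν) :
    ∃ Q', some Q' ∈ gdepResults (M.gicDep v) Q h ∧
      (fun i => (Q.head i).eval ν) ∈ Q'.answer I := by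
  rcases exists_neqChild_mem_answer_or_bodyHolds hhom hν hdis with ⟨p, hp, Q', hQ', hans⟩ | hκ
  · exact ⟨Q', .inl ⟨_, List.mem_map_of_mem hp, Q', rfl, hQ'⟩, hans⟩
  · have hmem := hv ⟨_, hκ, rfl⟩
    rw [hempty] at hmem
    exact hmem.elim

theorem exists_mem_gnegdSteps_mem_answer {v : M.views.idx} {C : Set (Option (CQNeq M.S k))}
    (hC : C ∈ M.gnegdSteps v Q) (hv : (M.views.defn v).answer I ⊆ M.mv.rels v)
    (hν : BodyHolds ν Q.body I) (hdis : ∀ p ∈ Q.diseqs, p.1.eval ν ≠ p.2.eval ν) :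
    ∃ Q', some Q' ∈ C ∧ (fun i => (Q.head i).eval ν) ∈ Q'.answer I := by
  obtain ⟨-, -, h, hhom, -, -, rfl⟩ := hC
  rcases exists_neqChild_mem_answer_or_bodyHolds hhom hν hdis with ⟨p, hp, Q', hQ', hans⟩ | hκ
  · exact ⟨Q', .inr (.inl ⟨p, hp, Q', rfl, hQ'⟩), hans⟩
  set t := fun i => ((M.views.defn v).head i).eval fun x => (h (2 * x)).eval ν
  have ht : t ∈ M.mv.rels v := hv ⟨_, hκ, rfl⟩
  have heq : ∀ p ∈ M.gnegdPairs v t, (p.1.subst h).eval ν = (p.2.subst h).eval ν := by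
    intro p hp
    obtain ⟨i, rfl⟩ := List.mem_ofFn.1 hp
    obtain ⟨c, hc⟩ := M.mvGround v t ht i
    change (((M.views.defn v).head i).orig.subst h).eval ν = ((t i).toTerm.subst h).eval ν
    rw [Term.eval_orig_subst]
    change t i = _
    rw [hc]
    rfl
  obtain ⟨Q', hQ', hans⟩ := exists_eqsChild_mem_answer hν hdis heq
  exact ⟨Q', .inl ⟨t, ht, Q', rfl, hQ'⟩, hans⟩

theorem nodeAnswer_subset_of_mem_qSteps {b c : Option (CQNeq M.S k)}
    {C : Set (Option (CQNeq M.S k))} (hC : C ∈ M.qSteps k b) (hc : c ∈ C) :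
    nodeAnswer c I ⊆ nodeAnswer b I := by
  obtain _ | Q := b
  · exact hC.elim
  obtain _ | Q' := c
  · exact Set.empty_subset _
  rcases hC with ⟨σ, -, h, -, -, rfl⟩ | ⟨σ, -, h, -, -, rfl⟩ | ⟨v, -, h, -, -, rfl⟩ |
    ⟨v, -, -, h, -, -, -, rfl⟩
  iterate 3 exact answer_subset_of_mem_gdepResults hc
  rcases hc with ⟨_, -, hd⟩ | ⟨_, -, hd⟩ | ⟨⟨⟩, -⟩
  all_goals exact answer_subset_of_mem_disjChild hd

theorem exists_mem_nodeAnswer_of_mem_qSteps (hdeps : I.satisfiesAll M.deps)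
    (hV : ∀ v, (M.views.defn v).answer I ⊆ M.mv.rels v) {b : Option (CQNeq M.S k)}
    {C : Set (Option (CQNeq M.S k))} (hC : C ∈ M.qSteps k b) {t : Fin k → Val}
    (ht : t ∈ nodeAnswer b I) : ∃ c ∈ C, t ∈ nodeAnswer c I := by
  obtain _ | Q := b
  · exact hC.elim
  obtain ⟨ν, hν, hdis, rfl⟩ := ht
  suffices ∃ Q', some Q' ∈ C ∧ (fun i => (Q.head i).eval ν) ∈ Q'.answer I from
    let ⟨Q', hQ', hans⟩ := this; ⟨some Q', hQ', hans⟩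
  rcases hC with ⟨σ, hσ, h, hhom, -, rfl⟩ | ⟨σ, hσ, h, hhom, -, rfl⟩ |
    ⟨v, hempty, h, hhom, -, rfl⟩ | ⟨v, hC⟩
  · exact TGD.exists_mem_gdepResults_mem_answer (hdeps _ hσ) hhom hν hdis
  · exact EGD.exists_mem_gdepResults_mem_answer (hdeps _ hσ) hhom hν hdis
  · exact exists_mem_gdepResults_gicDep_mem_answer hempty (hV v) hhom hν hdis
  · exact exists_mem_gnegdSteps_mem_answer hC (hV v) hν hdis

end MVSetting

theorem exists_valuation_of_renamed_apart {ι : Type*} (X : ι → Set ℕ) (ρ : ι → ℕ → Term)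
    (K : ι → ℕ → Val) (Y : Set ℕ) (μ : ℕ → Val) (hρ : ∀ i, ∀ x ∈ X i, ∃ y ∉ Y, ρ i x = .var y)
    (hapart : ∀ i i', ∀ x ∈ X i, ∀ x' ∈ X i', ρ i x = ρ i' x' → i = i' ∧ x = x') :
    ∃ ν : ℕ → Val, (∀ y ∈ Y, ν y = μ y) ∧ ∀ i, ∀ x ∈ X i, (ρ i x).eval ν = K i x := by
  classical
  choose f hfY hf using fun p : {p : ι × ℕ // p.2 ∈ X p.1} => hρ p.1.1 p.1.2 p.2
  have hfinj : f.Injective := by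
    rintro ⟨⟨i, x⟩, hx⟩ ⟨⟨i', x'⟩, hx'⟩ hff
    obtain ⟨rfl, rfl⟩ := hapart i i' x hx x' hx' (by rw [hf ⟨(i, x), hx⟩, hf ⟨(i', x'), hx'⟩, hff])
    rfl
  refine ⟨Function.extend f (fun p => K p.1.1 p.1.2) μ,
    fun y hy => Function.extend_apply' _ _ _ ?_, fun i x hx => ?_⟩
  · rintro ⟨p, rfl⟩
    exact hfY p hy
  · rw [hf ⟨(i, x), hx⟩]
    exact hfinj.extend_apply (fun p => K p.1.1 p.1.2) μ ⟨(i, x), hx⟩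

namespace MVSetting.IsMSExpansion

variable {M : MVSetting} {Q : CQ M.S k} {Q' : CQNeq M.S k}

theorem answer_subset (hexp : M.IsMSExpansion Q Q') (I : Inst M.S) :
    Q'.answer I ⊆ Q.answer I := by
  obtain ⟨hhead, -, _, -, -, -, hbody⟩ := hexp
  rintro _ ⟨μ, hμ, -, rfl⟩
  refine ⟨μ, fun A hA => hμ A ?_, by rw [hhead]⟩
  change A ∈ {A | A ∈ Q'.body}
  rw [hbody]
  exact .inl hA

theorem answer_subset_of_mv_subset (hexp : M.IsMSExpansion Q Q') {I : Inst M.S}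
    (hI : ∀ v, M.mv.rels v ⊆ (M.views.defn v).answer I) : Q.answer I ⊆ Q'.answer I := by
  obtain ⟨hhead, hdiseqs, ρ, hρhead, hρfresh, hρapart, hbody⟩ := hexp
  rintro _ ⟨μ, hμ, rfl⟩
  let ι := {p : (v : M.views.idx) × (Fin (M.views.arity v) → Val) // p.2 ∈ M.mv.rels p.1}
  choose K hK hKhead using fun i : ι => hI i.1.1 i.2
  let X (i : ι) : Set ℕ := {x | x ∈ BodyVars (M.views.defn i.1.1).body ∧
    ¬ ∃ j, (M.views.defn i.1.1).head j = .var x}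
  let Y : Set ℕ := {y | (∃ j, Q.head j = .var y) ∨ ∃ A ∈ Q.body, ∃ j, A.args j = .var y}
  obtain ⟨ν, hνY, hνX⟩ := exists_valuation_of_renamed_apart X (fun i => ρ i.1.1 i.1.2) K Y μ
    (fun i x hx => by
      obtain ⟨y, hy, hyhead, hybody⟩ := hρfresh _ _ i.2 x hx.1 hx.2
      exact ⟨y, fun hyY => hyY.elim (fun ⟨j, hj⟩ => hyhead j hj) hybody, hy⟩)
    (fun ⟨⟨v, t⟩, ht⟩ ⟨⟨v', t'⟩, ht'⟩ x hx x' hx' hxx' => by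
      obtain ⟨rfl, hteq, rfl⟩ := hρapart v v' t t' x x' ht ht' hx.1 hx.2 hx'.1 hx'.2 hxx'
      cases hteq
      exact ⟨rfl, rfl⟩)
  have hνK : ∀ i : ι, ∀ x ∈ BodyVars (M.views.defn i.1.1).body,
      (ρ i.1.1 i.1.2 x).eval ν = K i x := by
    intro i x hx
    by_cases hxhead : ∃ j, (M.views.defn i.1.1).head j = .var x
    · obtain ⟨j, hj⟩ := hxhead
      obtain ⟨c, hc⟩ := M.mvGround _ _ i.2 j
      have hρx : ρ i.1.1 i.1.2 x = (i.1.2 j).toTerm := by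
        simpa [hj, Term.subst] using hρhead _ _ i.2 j
      have hKx : i.1.2 j = K i x := by simpa [hj, Term.eval] using congrFun (hKhead i) j
      rw [hρx, ← hKx, hc]
      rfl
    · exact hνX i x ⟨hx, hxhead⟩
  refine ⟨ν, fun A hA => ?_, by simp [hdiseqs], ?_⟩
  · have hA' : A ∈ {A | A ∈ Q'.body} := hA
    rw [hbody] at hA'
    rcases hA' with hA | ⟨v, t, ht, A₀, hA₀, rfl⟩
    · have hargs : (fun j => (A.args j).eval ν) = fun j => (A.args j).eval μ :=
        funext fun j => (A.args j).eval_congr fun y hy => hνY y (.inr ⟨A, hA, j, hy⟩)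
      rw [hargs]
      exact hμ A hA
    · have hargs : (fun j => ((A₀.mapTerms (Term.subst (ρ v t))).args j).eval ν) =
          fun j => (A₀.args j).eval (K ⟨⟨v, t⟩, ht⟩) := funext fun j => by
        change ((A₀.args j).subst (ρ v t)).eval ν = _
        rw [Term.eval_subst]
        exact (A₀.args j).eval_congr fun x hx => hνK ⟨⟨v, t⟩, ht⟩ x ⟨A₀, hA₀, j, hx⟩
      rw [hargs]
      exact hK _ A₀ hA₀
  · funext j
    rw [hhead]
    exact (Q.head j).eval_congr fun y hy => (hνY y (.inl ⟨j, hy⟩)).symm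

end MVSetting.IsMSExpansion

theorem chase_result_containments (M : MVSetting) (hwa : WeaklyAcyclic M.deps)
    {k : ℕ} (Q : CQ M.S k) (hQ : Q.Safe) (Q' : CQNeq M.S k)
    (hexp : M.IsMSExpansion Q Q') (R : List (CQNeq M.S k)) (hR : M.IsChaseResult Q' R) :
    (∀ I : Inst M.S, ucqAnswer R I ⊆ Q.answer I) ∧
    (∀ I : Inst M.S, M.ValidBase I → Q.answer I ⊆ ucqAnswer R I) := by
  obtain ⟨T, hroot, hT, rfl⟩ := hR
  refine ⟨fun I t ht => ?_, fun I hI t ht => ?_⟩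
  · obtain ⟨o, ho, hto⟩ := mem_ucqAnswer_filterMap_id.1 ht
    have hleaf := hT.forall_mem_leaves (P := fun o => nodeAnswer o I ⊆ Q'.answer I)
      (fun _ hb _ hC _ hc => (M.nodeAnswer_subset_of_mem_qSteps hC hc).trans hb)
      (by rw [hroot]; rfl) o ho
    exact hexp.answer_subset I (hleaf hto)
  · have hroot' : t ∈ nodeAnswer T.label I := by
      rw [hroot]
      exact hexp.answer_subset_of_mv_subset (fun v => (hI.2.2 v).symm.subset) ht
    obtain ⟨o, ho, hto⟩ := hT.exists_mem_leaves (P := fun o => t ∈ nodeAnswer o I)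
      (fun _ hb _ hC =>
        M.exists_mem_nodeAnswer_of_mem_qSteps hI.2.1 (fun v => (hI.2.2 v).subset) hC hb)
      hroot'
    exact mem_ucqAnswer_filterMap_id.2 ⟨o, ho, hto⟩

end CertainViews
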